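/- The operator P = Σ_{j=1}^p f_{2j} f_{2j-1} satisfies the commutation relations [P, ∂_z] = -∂_z^J, [P, ∂_z†] = 0, [P, ∂_z^J] = 0 and [P, ∂_z†^J] = ∂_z†, where ∂_z = Σ_k ∂_{z_k} f_k†, ∂_z† = Σ_k ∂_{z̄_k} f_k, ∂_z^J = Σ_{j=1}^p (∂_{z_{2j}} f_{2j-1} - ∂_{z_{2j-1}} f_{2j}) and ∂_z†^J = Σ_{j=1}^p (∂_{z̄_{2j}} f†_{2j-1} - ∂_{z̄_{2j-1}} f†_{2j}). -/

import Mathlib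

open MvPolynomial TensorProduct

/-- Variables: `Sum.inl j` is `z_{j+1}`, `Sum.inr j` is `z̄_{j+1}` (0-indexed). -/
abbrev HVar (p : ℕ) := Fin (2*p) ⊕ Fin (2*p)

abbrev HPol (p : ℕ) := MvPolynomial (HVar p) ℂ

def idx0 {p : ℕ} (k : Fin p) : Fin (2*p) := ⟨2*k.1, by have := k.2; omega⟩
def idx1 {p : ℕ} (k : Fin p) : Fin (2*p) := ⟨2*k.1+1, by have := k.2; omega⟩

variable (p : ℕ) (A : Type*) [Ring A] [Algebra ℂ A]

/-- The (Wirtinger) partial derivative `∂_v`, acting on `A`-valued polynomials. -/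
noncomputable def Dop (v : HVar p) : Module.End ℂ (HPol p ⊗[ℂ] A) :=
  LinearMap.rTensor A (MvPolynomial.pderiv v).toLinearMap

/-- Left Clifford multiplication by `a : A` on `A`-valued polynomials. -/
noncomputable def mulF (a : A) : Module.End ℂ (HPol p ⊗[ℂ] A) :=
  LinearMap.lTensor (HPol p) (LinearMap.mulLeft ℂ a)

/-- Multiplication by the scalar polynomial `q` on `A`-valued polynomials. -/
noncomputable def mulP (q : HPol p) : Module.End ℂ (HPol p ⊗[ℂ] A) :=
  LinearMap.rTensor A (LinearMap.mulLeft ℂ q)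

/-- The hermitian Dirac operator `∂_z = Σ_k f_k† ∂_{z_k}`. -/
noncomputable def dz (fd : Fin (2*p) → A) : Module.End ℂ (HPol p ⊗[ℂ] A) :=
  ∑ k : Fin (2*p), mulF p A (fd k) * Dop p A (Sum.inl k)

/-- The hermitian Dirac operator `∂_z† = Σ_k f_k ∂_{z̄_k}`. -/
noncomputable def dzd (f : Fin (2*p) → A) : Module.End ℂ (HPol p ⊗[ℂ] A) :=
  ∑ k : Fin (2*p), mulF p A (f k) * Dop p A (Sum.inr k)

/-- The rotated Dirac operator `∂_z^J = Σ_j (∂_{z_{2j}} f_{2j-1} - ∂_{z_{2j-1}} f_{2j})`. -/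
noncomputable def dzJ (f : Fin (2*p) → A) : Module.End ℂ (HPol p ⊗[ℂ] A) :=
  ∑ j : Fin p, (mulF p A (f (idx0 j)) * Dop p A (Sum.inl (idx1 j))
    - mulF p A (f (idx1 j)) * Dop p A (Sum.inl (idx0 j)))

/-- The rotated Dirac operator `∂_z†^J = Σ_j (∂_{z̄_{2j}} f†_{2j-1} - ∂_{z̄_{2j-1}} f†_{2j})`. -/
noncomputable def dzdJ (fd : Fin (2*p) → A) : Module.End ℂ (HPol p ⊗[ℂ] A) :=
  ∑ j : Fin p, (mulF p A (fd (idx0 j)) * Dop p A (Sum.inr (idx1 j))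
    - mulF p A (fd (idx1 j)) * Dop p A (Sum.inr (idx0 j)))

/-!
The partial derivatives act on the polynomial factor and Clifford multiplication on the
coefficient, so they commute; hence `[P, Σ_k c_k ∂_k] = Σ_k [P, c_k] ∂_k` and everything
reduces to commutators in the Clifford algebra. There
`[f_b f_a, c] = f_b {f_a, c} - {f_b, c} f_a`, so `[P, f_k] = 0`, while
`[P, f†_{2j-1}] = f_{2j}` and `[P, f†_{2j}] = -f_{2j-1}`. Pairing the derivatives two by two
turns `∂_z` into `-∂_z^J` and `∂_z†^J` into `∂_z†`.
-/

section Indices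

variable {n : ℕ}

lemma idx0_injective : Function.Injective (idx0 (p := n)) := fun i j h => by
  simp only [idx0, Fin.mk.injEq] at h; exact Fin.ext (by omega)

lemma idx1_injective : Function.Injective (idx1 (p := n)) := fun i j h => by
  simp only [idx1, Fin.mk.injEq] at h; exact Fin.ext (by omega)

lemma idx0_ne_idx1 (i j : Fin n) : idx0 i ≠ idx1 j := by
  simp only [idx0, idx1, ne_eq, Fin.mk.injEq]; omega

lemma idx1_ne_idx0 (i j : Fin n) : idx1 i ≠ idx0 j := (idx0_ne_idx1 j i).symm

lemma sum_fin_two_mul_eq_sum_idx {M : Type*} [AddCommMonoid M] (g : Fin (2 * n) → M) :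
    ∑ k, g k = ∑ j, (g (idx0 j) + g (idx1 j)) := by
  rw [← (finProdFinEquiv.trans (finCongr (Nat.mul_comm n 2))).sum_comp, Fintype.sum_prod_type]
  refine Finset.sum_congr rfl fun j _ => ?_
  rw [Fin.sum_univ_two]
  congr 2 <;> ext <;> simp [idx0, idx1, finProdFinEquiv]; omega

end Indices

section Commutators

variable {R : Type*} [Ring R]

lemma Ring.lie_sum {ι : Type*} (s : Finset ι) (a : R) (g : ι → R) :
    ⁅a, ∑ i ∈ s, g i⁆ = ∑ i ∈ s, ⁅a, g i⁆ := by
  simp only [Ring.lie_def, Finset.mul_sum, Finset.sum_mul, Finset.sum_sub_distrib]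

lemma Ring.sum_lie {ι : Type*} (s : Finset ι) (g : ι → R) (a : R) :
    ⁅∑ i ∈ s, g i, a⁆ = ∑ i ∈ s, ⁅g i, a⁆ := by
  simp only [Ring.lie_def, Finset.mul_sum, Finset.sum_mul, Finset.sum_sub_distrib]

lemma Ring.lie_sub (a b c : R) : ⁅a, b - c⁆ = ⁅a, b⁆ - ⁅a, c⁆ := by
  simp only [Ring.lie_def]; noncomm_ring

lemma lie_mul_eq_mul_anticomm_sub_anticomm_mul (a b c : R) :
    ⁅b * a, c⁆ = b * (a * c + c * a) - (b * c + c * b) * a := by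
  simp only [Ring.lie_def]; noncomm_ring

lemma lie_map_mul_of_commute {E : Type*} [Ring E] (φ : R →+* E) {a : R} {d : E}
    (h : Commute (φ a) d) (c : R) : ⁅φ a, φ c * d⁆ = φ ⁅a, c⁆ * d := by
  rw [Ring.lie_def, Ring.lie_def, mul_assoc, ← h.eq, ← mul_assoc, ← mul_assoc, ← sub_mul,
    map_sub, map_mul, map_mul]

end Commutators

section Clifford

variable {R : Type*} [Ring R] {n : ℕ} {f fd : Fin (2 * n) → R}

/-- The paper's `P = Σ_j f_{2j} f_{2j-1}`: with 0-based indices, `f_{2j}` is `f (idx1 j)`. -/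
def pairProdSum (f : Fin (2 * n) → R) : R := ∑ j, f (idx1 j) * f (idx0 j)

lemma lie_pairProdSum_of_anticomm (hff : ∀ j k, f j * f k + f k * f j = 0) (k : Fin (2 * n)) :
    ⁅pairProdSum f, f k⁆ = 0 := by
  simp [pairProdSum, Ring.sum_lie, lie_mul_eq_mul_anticomm_sub_anticomm_mul, hff]

lemma lie_mul_dual_eq_ite (hfd : ∀ j k, f j * fd k + fd k * f j = if j = k then 1 else 0)
    (a b k : Fin (2 * n)) :
    ⁅f b * f a, fd k⁆ = (if a = k then f b else 0) - if b = k then f a else 0 := by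
  rw [lie_mul_eq_mul_anticomm_sub_anticomm_mul, hfd, hfd]
  split_ifs <;> simp

lemma lie_pairProdSum_dual_idx0
    (hfd : ∀ j k, f j * fd k + fd k * f j = if j = k then 1 else 0) (i : Fin n) :
    ⁅pairProdSum f, fd (idx0 i)⁆ = f (idx1 i) := by
  simp [pairProdSum, Ring.sum_lie, lie_mul_dual_eq_ite hfd, idx0_injective.eq_iff, idx1_ne_idx0]

lemma lie_pairProdSum_dual_idx1
    (hfd : ∀ j k, f j * fd k + fd k * f j = if j = k then 1 else 0) (i : Fin n) :
    ⁅pairProdSum f, fd (idx1 i)⁆ = -f (idx0 i) := by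
  simp [pairProdSum, Ring.sum_lie, lie_mul_dual_eq_ite hfd, idx1_injective.eq_iff, idx0_ne_idx1]

end Clifford

section DiracOperators

variable {R E : Type*} [Ring R] [Ring E] {n : ℕ} (φ : R →+* E) (D : Fin (2 * n) → E)

def diracSum (c : Fin (2 * n) → R) : E := ∑ k, φ (c k) * D k

def diracSumJ (c : Fin (2 * n) → R) : E :=
  ∑ j, (φ (c (idx0 j)) * D (idx1 j) - φ (c (idx1 j)) * D (idx0 j))

variable {φ D}

lemma diracSum_eq_sum_idx (c : Fin (2 * n) → R) :
    diracSum φ D c = ∑ j, (φ (c (idx0 j)) * D (idx0 j) + φ (c (idx1 j)) * D (idx1 j)) :=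
  sum_fin_two_mul_eq_sum_idx _

lemma lie_diracSum {a : R} (hD : ∀ k, Commute (φ a) (D k)) (c : Fin (2 * n) → R) :
    ⁅φ a, diracSum φ D c⁆ = diracSum φ D (fun k => ⁅a, c k⁆) := by
  simp only [diracSum, Ring.lie_sum, lie_map_mul_of_commute φ (hD _)]

lemma lie_diracSumJ {a : R} (hD : ∀ k, Commute (φ a) (D k)) (c : Fin (2 * n) → R) :
    ⁅φ a, diracSumJ φ D c⁆ = diracSumJ φ D (fun k => ⁅a, c k⁆) := by
  simp only [diracSumJ, Ring.lie_sum, Ring.lie_sub, lie_map_mul_of_commute φ (hD _)]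

variable {f fd : Fin (2 * n) → R}

lemma lie_pairProdSum_diracSum_of_anticomm (hD : ∀ k, Commute (φ (pairProdSum f)) (D k))
    (hff : ∀ j k, f j * f k + f k * f j = 0) :
    ⁅φ (pairProdSum f), diracSum φ D f⁆ = 0 := by
  rw [lie_diracSum hD]
  simp [diracSum, lie_pairProdSum_of_anticomm hff]

lemma lie_pairProdSum_diracSumJ_of_anticomm (hD : ∀ k, Commute (φ (pairProdSum f)) (D k))
    (hff : ∀ j k, f j * f k + f k * f j = 0) :
    ⁅φ (pairProdSum f), diracSumJ φ D f⁆ = 0 := by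
  rw [lie_diracSumJ hD]
  simp [diracSumJ, lie_pairProdSum_of_anticomm hff]

lemma lie_pairProdSum_diracSum_dual (hD : ∀ k, Commute (φ (pairProdSum f)) (D k))
    (hfd : ∀ j k, f j * fd k + fd k * f j = if j = k then 1 else 0) :
    ⁅φ (pairProdSum f), diracSum φ D fd⁆ = -diracSumJ φ D f := by
  rw [lie_diracSum hD, diracSum_eq_sum_idx, diracSumJ, ← Finset.sum_neg_distrib]
  refine Finset.sum_congr rfl fun j _ => ?_
  rw [lie_pairProdSum_dual_idx0 hfd, lie_pairProdSum_dual_idx1 hfd, map_neg, neg_mul]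
  abel

lemma lie_pairProdSum_diracSumJ_dual (hD : ∀ k, Commute (φ (pairProdSum f)) (D k))
    (hfd : ∀ j k, f j * fd k + fd k * f j = if j = k then 1 else 0) :
    ⁅φ (pairProdSum f), diracSumJ φ D fd⁆ = diracSum φ D f := by
  rw [lie_diracSumJ hD, diracSum_eq_sum_idx, diracSumJ]
  refine Finset.sum_congr rfl fun j _ => ?_
  rw [lie_pairProdSum_dual_idx0 hfd, lie_pairProdSum_dual_idx1 hfd, map_neg, neg_mul,
    sub_neg_eq_add, add_comm]

end DiracOperators

section CliffordValuedPolynomials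

variable {p A}

/-- `mulF` as a ring homomorphism: `mulFRingHom a` is `mulF p A a` by definition. -/
noncomputable def mulFRingHom : A →+* Module.End ℂ (HPol p ⊗[ℂ] A) :=
  ((Module.End.lTensorAlgHom ℂ A (HPol p)).comp (Algebra.lmul ℂ A)).toRingHom

lemma commute_mulF_Dop (a : A) (v : HVar p) : Commute (mulF p A a) (Dop p A v) := by
  simp only [Commute, SemiconjBy, Dop, mulF, Module.End.mul_eq_comp,
    LinearMap.rTensor_comp_lTensor, LinearMap.lTensor_comp_rTensor]

end CliffordValuedPolynomials

theorem P_dirac_commutators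
    (f fd : Fin (2*p) → A)
    (hff : ∀ j k, f j * f k + f k * f j = 0)
    (hfd : ∀ j k, f j * fd k + fd k * f j = if j = k then 1 else 0) :
    let P : Module.End ℂ (HPol p ⊗[ℂ] A) := mulF p A (∑ j : Fin p, f (idx1 j) * f (idx0 j))
    P * dz p A fd - dz p A fd * P = -(dzJ p A f) ∧
    P * dzd p A f - dzd p A f * P = 0 ∧
    P * dzJ p A f - dzJ p A f * P = 0 ∧
    P * dzdJ p A fd - dzdJ p A fd * P = dzd p A f := by
  intro P
  let φ : A →+* Module.End ℂ (HPol p ⊗[ℂ] A) := mulFRingHom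
  have hD (v : HVar p) : Commute P (Dop p A v) := commute_mulF_Dop _ v
  -- Stated as `have`s: unifying these directly with the goal's `P * X - X * P` times out.
  have hdz := lie_pairProdSum_diracSum_dual (φ := φ) (D := (Dop p A <| .inl ·))
    (fun _ => hD _) hfd
  have hdzd := lie_pairProdSum_diracSum_of_anticomm (φ := φ) (D := (Dop p A <| .inr ·))
    (fun _ => hD _) hff
  have hdzJ := lie_pairProdSum_diracSumJ_of_anticomm (φ := φ) (D := (Dop p A <| .inl ·))
    (fun _ => hD _) hff
  have hdzdJ := lie_pairProdSum_diracSumJ_dual (φ := φ) (D := (Dop p A <| .inr ·))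
    (fun _ => hD _) hfd
  exact ⟨hdz, hdzd, hdzJ, hdzdJ⟩
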